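/- arXiv:1807.06251 — 5 statements merged into one kernel-verified Lean document; each statement's English description precedes it below -/
import Mathlib

section
/- Let Delta >= 2 be an integer, let G be a finite simple graph with maximum degree at most Delta, let R >= 1 be an integer, and let K be a real number with K >= 30 * ln(Delta). For each i in {1, ..., R}, form a random edge set H_i by including each edge of G independently with probability p'_i = min(K * 2^i / (4*Delta), 1), where all inclusion events (over all edges and all indices i) are mutually independent, and let H be the union of H_1, ..., H_R. Then for every vertex v of G, the probability that the number of edges of H incident to v exceeds 2*K*2^R is at most Delta^{-10}. -/
/-!
The edges of `H` at `v` are at most the sampled pairs `(i, e)` with `e ∋ v`, whose number `S` is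
a sum of independent indicators of total mean at most `m = ∑ᵢ Δ · K 2^(i+1) / (4Δ) ≤ K 2^R / 2`.
The exponential moment at `t = 1` gives `E e^S ≤ e^((e-1) m) ≤ e^(2m)`, hence
`P(S ≥ 4m) ≤ e^(-2m) = e^(-K 2^R) ≤ e^(-K) ≤ Δ^(-30)`.
-/

open MeasureTheory ProbabilityTheory Finset Real

section BernoulliChernoff

variable {Ω : Type*}

lemma Bool.toNat_comp_eq_indicator (B : Ω → Bool) :
    (fun ω => ((B ω).toNat : ℝ)) = {ω | B ω = true}.indicator 1 := by
  ext ω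
  cases h : B ω <;> simp [h]

lemma Real.exp_mul_toNat (t : ℝ) (b : Bool) : exp (t * b.toNat) = 1 + (exp t - 1) * b.toNat := by
  cases b <;> simp

variable [MeasurableSpace Ω] {μ : Measure Ω} [IsProbabilityMeasure μ]

lemma mgf_toNat {B : Ω → Bool} (hB : Measurable B) (t : ℝ) :
    mgf (fun ω => ((B ω).toNat : ℝ)) μ t = 1 + (exp t - 1) * μ.real {ω | B ω = true} := by
  have hset : MeasurableSet {ω | B ω = true} := hB (measurableSet_singleton true)
  have hint : Integrable (fun ω => ((B ω).toNat : ℝ)) μ := by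
    rw [Bool.toNat_comp_eq_indicator]
    exact (integrable_const 1).indicator hset
  simp only [mgf, exp_mul_toNat]
  rw [integral_add (integrable_const 1) (hint.const_mul _), integral_const_mul,
    Bool.toNat_comp_eq_indicator, integral_indicator_one hset]
  simp

theorem measureReal_sum_toNat_ge_le_exp {ι : Type*} {B : ι → Ω → Bool}
    (hB : ∀ i, Measurable (B i)) (hind : iIndepFun B μ) (s : Finset ι) {t : ℝ} (ht : 0 ≤ t)
    (a : ℝ) :
    μ.real {ω | a ≤ ∑ i ∈ s, ((B i ω).toNat : ℝ)}
      ≤ exp (-t * a + (exp t - 1) * ∑ i ∈ s, μ.real {ω | B i ω = true}) := by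
  set X : ι → Ω → ℝ := fun i ω => ((B i ω).toNat : ℝ)
  have hX : ∀ i, Measurable (X i) := fun i => by fun_prop
  have hindX : iIndepFun X μ := hind.comp (fun _ b => (b.toNat : ℝ)) fun _ => measurable_from_top
  have hint : ∀ i ∈ s, Integrable (fun ω => exp (t * X i ω)) μ := fun i _ =>
    .of_bound (by fun_prop) (exp t) (.of_forall fun ω => by
      cases h : B i ω <;> simp [X, h, one_le_exp ht])
  have hmgf : mgf (∑ i ∈ s, X i) μ t ≤ exp ((exp t - 1) * ∑ i ∈ s, μ.real {ω | B i ω = true}) := by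
    rw [hindX.mgf_sum hX, Finset.mul_sum, exp_sum]
    gcongr with i
    · exact fun i _ => mgf_nonneg
    · rw [mgf_toNat (hB i), add_comm]
      exact add_one_le_exp _
  calc μ.real {ω | a ≤ ∑ i ∈ s, ((B i ω).toNat : ℝ)}
      = μ.real {ω | a ≤ (∑ i ∈ s, X i) ω} := by simp only [Finset.sum_apply, X]
    _ ≤ exp (-t * a) * mgf (∑ i ∈ s, X i) μ t :=
        measure_ge_le_exp_mul_mgf a ht (hindX.integrable_exp_mul_sum hX hint)
    _ ≤ _ := by rw [exp_add]; gcongr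

theorem measureReal_sum_toNat_ge_four_mul_le {ι : Type*} {B : ι → Ω → Bool}
    (hB : ∀ i, Measurable (B i)) (hind : iIndepFun B μ) (s : Finset ι) {m : ℝ}
    (hm : ∑ i ∈ s, μ.real {ω | B i ω = true} ≤ m) :
    μ.real {ω | 4 * m ≤ ∑ i ∈ s, ((B i ω).toNat : ℝ)} ≤ exp (-(2 * m)) := by
  refine (measureReal_sum_toNat_ge_le_exp hB hind s zero_le_one _).trans (exp_le_exp.2 ?_)
  have hmean_nonneg : 0 ≤ ∑ i ∈ s, μ.real {ω | B i ω = true} :=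
    sum_nonneg fun _ _ => measureReal_nonneg
  have he : exp 1 - 1 ≤ 2 := by linarith [exp_one_lt_d9]
  linarith [mul_le_mul_of_nonneg_right he hmean_nonneg]

end BernoulliChernoff

lemma ENNReal.ofReal_exp_neg_mul_log_natCast {n : ℕ} (hn : 0 < n) (k : ℕ) :
    ENNReal.ofReal (Real.exp (-(k * Real.log n))) = (n : ENNReal)⁻¹ ^ k := by
  rw [Real.exp_neg, ← Real.log_pow, Real.exp_log (by positivity), ← inv_pow,
    ENNReal.ofReal_pow (by positivity), ENNReal.ofReal_inv_of_pos (by positivity),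
    ENNReal.ofReal_natCast]

lemma SimpleGraph.card_filter_mem_edgeSet_eq_degree {V : Type*} [Fintype V] [DecidableEq V]
    (G : SimpleGraph V) [DecidableRel G.Adj] (v : V) :
    #{e : G.edgeSet | v ∈ (e : Sym2 V)} = G.degree v := by
  rw [← card_incidenceFinset_eq_degree, incidenceFinset_eq_filter]
  refine card_bij (fun e _ => (e : Sym2 V)) ?_ ?_ ?_ <;> simp +contextual

lemma card_filter_exists_le_sum_toNat {ι E : Type*} [Fintype ι] [Fintype E] (p : E → Prop)
    (b : ι × E → Bool) [DecidablePred p] [DecidablePred fun e => p e ∧ ∃ i, b (i, e) = true] :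
    (#{e | p e ∧ ∃ i, b (i, e) = true} : ℝ)
      ≤ ∑ x ∈ (univ : Finset ι) ×ˢ ({e | p e} : Finset E), ((b x).toNat : ℝ) := by
  rw [card_filter, sum_product_right, sum_filter, Nat.cast_sum]
  refine sum_le_sum fun e _ => ?_
  split_ifs with h hp hp
  · obtain ⟨i, hi⟩ := h.2
    calc ((1 : ℕ) : ℝ) = (b (i, e)).toNat := by simp [hi]
      _ ≤ ∑ j, ((b (j, e)).toNat : ℝ) :=
        single_le_sum (f := fun j => ((b (j, e)).toNat : ℝ)) (fun _ _ => by positivity) (mem_univ i)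
  · exact absurd h.1 hp
  · simp only [Nat.cast_zero]; positivity
  · simp

lemma sum_range_two_pow_succ (R : ℕ) : ∑ i ∈ range R, (2 : ℝ) ^ (i + 1) = 2 ^ (R + 1) - 2 := by
  induction R with
  | zero => simp
  | succ n ih => rw [sum_range_succ, ih]; ring

lemma sum_min_two_pow_div_le {E : Type*} (R : ℕ) (s : Finset E) {Δ : ℕ} (hs : #s ≤ Δ)
    {K : ℝ} (hK : 0 ≤ K) :
    ∑ x ∈ (univ : Finset (Fin R)) ×ˢ s, min (K * 2 ^ ((x.1 : ℕ) + 1) / (4 * Δ)) 1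
      ≤ K * 2 ^ R / 2 := by
  calc ∑ x ∈ (univ : Finset (Fin R)) ×ˢ s, min (K * 2 ^ ((x.1 : ℕ) + 1) / (4 * Δ)) 1
      ≤ ∑ i : Fin R, ∑ _e ∈ s, K * 2 ^ ((i : ℕ) + 1) / (4 * Δ) := by
        rw [sum_product]
        gcongr
        exact min_le_left _ _
    _ = ∑ i : Fin R, ((#s : ℝ) / Δ) * (K / 4 * 2 ^ ((i : ℕ) + 1)) := by
        simp only [sum_const, nsmul_eq_mul]
        congr! 1 with i
        ring
    _ ≤ ∑ i : Fin R, K / 4 * 2 ^ ((i : ℕ) + 1) := by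
        refine sum_le_sum fun i _ => ?_
        exact mul_le_of_le_one_left (by positivity)
          (div_le_one_of_le₀ (by exact_mod_cast hs) (Nat.cast_nonneg Δ))
    _ = K / 4 * (2 ^ (R + 1) - 2) := by
        rw [← mul_sum, Fin.sum_univ_eq_sum_range (fun i => (2 : ℝ) ^ (i + 1)),
          sum_range_two_pow_succ]
    _ ≤ K * 2 ^ R / 2 := by rw [pow_succ]; nlinarith

theorem sparsified_degree_bound_general
    {V : Type*} [Fintype V] [DecidableEq V]
    (G : SimpleGraph V) [DecidableRel G.Adj]
    (Δ : ℕ) (hdeg : ∀ v, G.degree v ≤ Δ)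
    (R : ℕ)
    (K : ℝ) (hK : 30 * Real.log Δ ≤ K)
    {Ω : Type*} [MeasurableSpace Ω] (μ : Measure Ω) [IsProbabilityMeasure μ]
    (B : (Fin R × G.edgeSet) → Ω → Bool)
    (hmeas : ∀ x, Measurable (B x))
    (hind : iIndepFun B μ)
    (hprob : ∀ x : Fin R × G.edgeSet,
      μ {ω | B x ω = true}
        = ENNReal.ofReal (min (K * 2 ^ ((x.1 : ℕ) + 1) / (4 * Δ)) 1)) :
    ∀ v : V,
      μ {ω | 2 * K * 2 ^ R <
          ((Finset.univ.filter (fun e : G.edgeSet =>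
              v ∈ (e : Sym2 V) ∧ ∃ i : Fin R, B (i, e) ω = true)).card : ℝ)}
        ≤ ((Δ : ENNReal))⁻¹ ^ 10 := by
  intro v
  obtain rfl | hΔ := Nat.eq_zero_or_pos Δ
  · simp -- `(0 : ℝ≥0∞)⁻¹ = ⊤`
  have hK0 : 0 ≤ K := le_trans (mul_nonneg (by norm_num) (Real.log_natCast_nonneg Δ)) hK
  set I : Finset G.edgeSet := {e | v ∈ (e : Sym2 V)}
  have hmean : ∑ x ∈ univ ×ˢ I, μ.real {ω | B x ω = true} ≤ K * 2 ^ R / 2 := by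
    have hp : ∀ x, μ.real {ω | B x ω = true} = min (K * 2 ^ ((x.1 : ℕ) + 1) / (4 * Δ)) 1 :=
      fun x => by
        rw [measureReal_def, hprob, ENNReal.toReal_ofReal (le_min (by positivity) zero_le_one)]
    simp only [hp]
    exact sum_min_two_pow_div_le R I (G.card_filter_mem_edgeSet_eq_degree v ▸ hdeg v) hK0
  have hexp : -(2 * (K * 2 ^ R / 2)) ≤ -((10 : ℕ) * Real.log Δ) := by
    have hK_le : K ≤ K * 2 ^ R := le_mul_of_one_le_right hK0 (one_le_pow₀ one_le_two)
    push_cast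
    linarith [Real.log_natCast_nonneg Δ]
  calc μ _ ≤ μ {ω | 4 * (K * 2 ^ R / 2) ≤ ∑ x ∈ univ ×ˢ I, ((B x ω).toNat : ℝ)} :=
        measure_mono <| Set.ofPred_subset_ofPred.2 fun ω hω => by
          linarith [card_filter_exists_le_sum_toNat (fun e : G.edgeSet => v ∈ (e : Sym2 V)) (B · ω)]
    _ = ENNReal.ofReal (μ.real _) := (ofReal_measureReal).symm
    _ ≤ ENNReal.ofReal (exp (-((10 : ℕ) * Real.log Δ))) := ENNReal.ofReal_le_ofReal
        ((measureReal_sum_toNat_ge_four_mul_le hmeas hind _ hmean).trans (exp_le_exp.2 hexp))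
    _ = _ := ENNReal.ofReal_exp_neg_mul_log_natCast hΔ 10

/-- Part (A) of the warm-up lemma: if each edge of a graph `G` of maximum degree at
most `Δ` is included in `H i` independently with probability
`p'_i = min (K * 2^i / (4Δ)) 1` for `i ∈ {1, …, R}` (all inclusion events mutually
independent) and `H = ⋃ i, H i`, then for every vertex `v` the probability that the
number of edges of `H` incident to `v` exceeds `2K·2^R` is at most `Δ⁻¹⁰`. -/
theorem sparsified_degree_bound
    {V : Type*} [Fintype V] [DecidableEq V]
    (G : SimpleGraph V) [DecidableRel G.Adj]
    (Δ : ℕ) (hΔ : 2 ≤ Δ) (hdeg : ∀ v, G.degree v ≤ Δ)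
    (R : ℕ) (hR : 1 ≤ R)
    (K : ℝ) (hK : 30 * Real.log Δ ≤ K)
    {Ω : Type*} [MeasurableSpace Ω] (μ : Measure Ω) [IsProbabilityMeasure μ]
    (B : (Fin R × G.edgeSet) → Ω → Bool)
    (hmeas : ∀ x, Measurable (B x))
    (hind : iIndepFun B μ)
    (hprob : ∀ x : Fin R × G.edgeSet,
      μ {ω | B x ω = true}
        = ENNReal.ofReal (min (K * 2 ^ ((x.1 : ℕ) + 1) / (4 * Δ)) 1)) :
    ∀ v : V,
      μ {ω | 2 * K * 2 ^ R <
          ((Finset.univ.filter (fun e : G.edgeSet =>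
              v ∈ (e : Sym2 V) ∧ ∃ i : Fin R, B (i, e) ω = true)).card : ℝ)}
        ≤ ((Δ : ENNReal))⁻¹ ^ 10 :=
  sparsified_degree_bound_general G Δ hdeg R K hK μ B hmeas hind hprob
end

section
/- Let Delta >= 2 be an integer, let i >= 0 be an integer, and let K be a real number with K >= 320 * ln(Delta) and q = K * 2^i / (4*Delta) <= 1. Let S be a finite set with |S| >= Delta / 2^i, and sample each element of S independently with probability q. Then the probability that fewer than K/8 elements of S are sampled is at most Delta^{-10}. -/
/-!
Chernoff's bound at `t = -log 2`: the moment generating function of each indicator there is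
`1 - q/2 ≤ exp (-q/2)`, so the number `X` of sampled elements satisfies
`P(X ≤ K/8) ≤ 2^(K/8) exp (-q|S|/2) ≤ exp ((log 2 - 1) K/8)`, using `E X = q|S| ≥ K/4`.
Since `(1 - log 2) · 320 / 8 > 10`, this is at most `Δ⁻¹⁰`.
-/

open MeasureTheory ProbabilityTheory Real

lemma exp_mul_ite_bool_eq_indicator_add_one {Ω : Type*} (B : Ω → Bool) (t : ℝ) :
    (fun ω => exp (t * if B ω then 1 else 0)) =
      fun ω => {ω | B ω = true}.indicator (fun _ => exp t - 1) ω + 1 := by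
  funext ω
  by_cases h : B ω = true <;> simp [h]

section

variable {Ω : Type*} [MeasurableSpace Ω] {μ : Measure Ω} [IsProbabilityMeasure μ]
  {B : Ω → Bool}

lemma integrable_exp_mul_ite_bool (hB : Measurable B) (t : ℝ) :
    Integrable (fun ω => exp (t * if B ω then 1 else 0)) μ := by
  rw [exp_mul_ite_bool_eq_indicator_add_one]
  exact ((integrable_const _).indicator (hB (measurableSet_singleton true))).add
    (integrable_const 1)

lemma mgf_ite_bool (hB : Measurable B) {p : ℝ} (hp : 0 ≤ p)
    (hprob : μ {ω | B ω = true} = ENNReal.ofReal p) (t : ℝ) :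
    mgf (fun ω => if B ω then (1 : ℝ) else 0) μ t = 1 + p * (exp t - 1) := by
  have hmeas : MeasurableSet {ω | B ω = true} := hB (measurableSet_singleton true)
  rw [mgf, exp_mul_ite_bool_eq_indicator_add_one,
    integral_add ((integrable_const _).indicator hmeas) (integrable_const 1),
    integral_indicator_const _ hmeas, integral_const, measureReal_def, hprob,
    ENNReal.toReal_ofReal hp]
  simp only [probReal_univ, smul_eq_mul, one_mul]
  ring

end

section

variable {Ω ι : Type*} [MeasurableSpace Ω] {μ : Measure Ω} [IsProbabilityMeasure μ]
  [Fintype ι] {B : ι → Ω → Bool} {p : ℝ}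

lemma measureReal_card_filter_le_le_exp_mul_pow (hB : ∀ a, Measurable (B a))
    (hind : iIndepFun B μ) (hp : 0 ≤ p)
    (hprob : ∀ a, μ {ω | B a ω = true} = ENNReal.ofReal p) (c : ℝ) {t : ℝ} (ht : t ≤ 0) :
    μ.real {ω | ((Finset.univ.filter fun a => B a ω = true).card : ℝ) ≤ c} ≤
      exp (-t * c) * (1 + p * (exp t - 1)) ^ Fintype.card ι := by
  set Y : ι → Ω → ℝ := fun a ω => if B a ω then 1 else 0
  have hY : ∀ a, Measurable (Y a) := fun a =>
    (measurable_from_top (f := fun b : Bool => if b then (1 : ℝ) else 0)).comp (hB a)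
  have hYind : iIndepFun Y μ := hind.comp (fun _ b => if b then 1 else 0)
    fun _ => measurable_from_top
  have hcount (ω : Ω) :
      ((Finset.univ.filter fun a => B a ω = true).card : ℝ) = (∑ a, Y a) ω := by
    rw [Finset.sum_apply, Finset.natCast_card_filter]
  simp_rw [hcount]
  calc _ ≤ exp (-t * c) * mgf (∑ a, Y a) μ t := measure_le_le_exp_mul_mgf c ht
        (hYind.integrable_exp_mul_sum hY fun a _ => integrable_exp_mul_ite_bool (hB a) t)
    _ = _ := by
        rw [hYind.mgf_sum hY]
        simp [Y, mgf_ite_bool (hB _) hp (hprob _)]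

lemma measureReal_card_filter_le_le_exp (hB : ∀ a, Measurable (B a)) (hind : iIndepFun B μ)
    (hp : 0 ≤ p) (hp1 : p ≤ 1) (hprob : ∀ a, μ {ω | B a ω = true} = ENNReal.ofReal p)
    (c : ℝ) :
    μ.real {ω | ((Finset.univ.filter fun a => B a ω = true).card : ℝ) ≤ c} ≤
      exp (log 2 * c - p * Fintype.card ι / 2) := by
  have hbase : 1 + p * (exp (-log 2) - 1) = 1 - p / 2 := by
    rw [exp_neg, exp_log two_pos]; ring
  calc _ ≤ exp (log 2 * c) * (1 - p / 2) ^ Fintype.card ι := by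
        simpa [hbase] using measureReal_card_filter_le_le_exp_mul_pow hB hind hp hprob c
          (neg_nonpos.mpr (log_nonneg one_le_two))
    _ ≤ exp (log 2 * c) * exp (-(p / 2)) ^ Fintype.card ι := by
        gcongr
        · linarith
        · linarith [add_one_le_exp (-(p / 2))]
    _ = exp (log 2 * c - p * Fintype.card ι / 2) := by
        rw [← exp_nat_mul, ← exp_add]; ring_nf

end

/-- Probabilistic core of part (B) of the warm-up lemma: if every element of a set
`S` with `|S| ≥ Δ/2^i` is sampled independently with probability
`q = K·2^i/(4Δ) ≤ 1`, where `K ≥ 320 ln Δ`, then the probability that fewer than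
`K/8` elements are sampled is at most `Δ⁻¹⁰`. -/
theorem sampled_degree_lower_bound
    (Δ : ℕ) (hΔ : 2 ≤ Δ) (i : ℕ)
    (K : ℝ) (hK : 320 * Real.log Δ ≤ K)
    (q : ℝ) (hq : q = K * 2 ^ i / (4 * Δ)) (hq1 : q ≤ 1)
    {α : Type*} (S : Finset α) (hS : (Δ : ℝ) / 2 ^ i ≤ S.card)
    {Ω : Type*} [MeasurableSpace Ω] (μ : Measure Ω) [IsProbabilityMeasure μ]
    (B : {a // a ∈ S} → Ω → Bool)
    (hmeas : ∀ a, Measurable (B a))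
    (hind : iIndepFun B μ)
    (hprob : ∀ a, μ {ω | B a ω = true} = ENNReal.ofReal q) :
    μ {ω | ((Finset.univ.filter (fun a : {a // a ∈ S} => B a ω = true)).card : ℝ)
        < K / 8}
      ≤ ((Δ : ENNReal))⁻¹ ^ 10 := by
  have hΔ0 : (0 : ℝ) < Δ := by positivity
  have hlogΔ : 0 < log Δ := log_pos (by exact_mod_cast hΔ)
  have hK0 : 0 ≤ K := by linarith
  have hq0 : 0 ≤ q := by rw [hq]; positivity
  have hmean : K / 4 ≤ q * S.card := calc
    K / 4 = q * (Δ / 2 ^ i) := by rw [hq]; field_simp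
    _ ≤ q * S.card := by gcongr
  have hexponent : log 2 * (K / 8) - q * S.card / 2 ≤ log ((Δ : ℝ)⁻¹ ^ 10) := by
    rw [log_pow, log_inv]
    nlinarith [log_two_lt_d9]
  have htail : μ.real {ω | ((Finset.univ.filter fun a => B a ω = true).card : ℝ) < K / 8} ≤
      (Δ : ℝ)⁻¹ ^ 10 := calc
    _ ≤ μ.real {ω | ((Finset.univ.filter fun a => B a ω = true).card : ℝ) ≤ K / 8} :=
        measureReal_mono (Set.ofPred_subset_ofPred.2 fun _ => le_of_lt)
    _ ≤ exp (log 2 * (K / 8) - q * S.card / 2) := by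
        simpa using measureReal_card_filter_le_le_exp hmeas hind hq0 hq1 hprob (K / 8)
    _ ≤ (Δ : ℝ)⁻¹ ^ 10 := (exp_le_exp.mpr hexponent).trans_eq (exp_log (by positivity))
  rw [← ofReal_measureReal]
  refine (ENNReal.ofReal_le_ofReal htail).trans_eq ?_
  rw [ENNReal.ofReal_pow (by positivity), ENNReal.ofReal_inv_of_pos hΔ0, ENNReal.ofReal_natCast]
end

section
/- There is an absolute constant c >= 1 such that the following holds. Let Delta >= 2 be an integer, C >= 1 a real number, and k an integer with k >= c * C * ln(Delta). Let N be a finite set, p : N -> [0,1], and let (b_{j,u})_{j in {1,...,k}, u in N} be mutually independent Bernoulli random variables where b_{j,u} has parameter p(u). Set d = sum_{u in N} p(u) and, for each j, set dhat^j = |{u in N : b_{j,u} = 1}|. Then with probability at least 1 - 1/Delta^C all of the following hold simultaneously: (1) if d > 20, then dhat^j >= 2 for more than half of the indices j in {1,...,k}; (2) dhat^j <= 4*d for more than half of the indices j in {1,...,k}; (3) if d < 0.4, then dhat^j < 2 for more than half of the indices j in {1,...,k}. -/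
/-!
Call repetition `j` good for a property if its count `dhat^j` has it. Each repetition is good
with probability at least `3/4`: for `dhat ≤ 4d` by Markov's inequality; for `dhat < 2` when
`d < 0.4` since a union bound over pairs gives `P(dhat ≥ 2) ≤ d²`; and for `dhat ≥ 2` when
`d > 20` since `1{dhat < 2} ≤ e^{1 - dhat}` and, by independence,
`E[e^{-dhat}] = ∏ (1 - (1 - e⁻¹) p u) ≤ e^{-d/2}`.
The rows `(b (j, u))_u` are independent, so by Hoeffding's inequality the bad repetitions form at
least half of the `k` only with probability `e^{-k/8}`, and `3 e^{-k/8} ≤ Δ^{-C}` once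
`k ≥ 24 C ln Δ`.
-/

open MeasureTheory ProbabilityTheory Real Finset
open scoped NNReal

open Measure in
theorem ProbabilityTheory.iIndepFun.curry {Ω ι κ 𝓧 : Type*} [MeasurableSpace Ω]
    [MeasurableSpace 𝓧] {μ : Measure Ω} {X : ι × κ → Ω → 𝓧} (hX : ∀ p, Measurable (X p))
    (h : iIndepFun X μ) :
    iIndepFun (fun i ω j ↦ X (i, j) ω) μ := by
  have := h.isProbabilityMeasure
  have (p : ι × κ) : IsProbabilityMeasure (μ.map (X p)) :=
    isProbabilityMeasure_map (hX p).aemeasurable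
  rw [iIndepFun_iff_map_fun_eq_infinitePi_map fun i ↦ by fun_prop]
  calc μ.map (fun ω i j ↦ X (i, j) ω)
      = (μ.map fun ω p ↦ X p ω).map (MeasurableEquiv.curry ι κ 𝓧) := by
        rw [Measure.map_map (by fun_prop) (by fun_prop)]; rfl
    _ = infinitePi fun i ↦ infinitePi fun j ↦ μ.map (X (i, j)) := by
        rw [h.map_fun_eq_infinitePi_map hX]
        exact infinitePi_map_curry fun i j ↦ μ.map (X (i, j))
    _ = infinitePi fun i ↦ μ.map (fun ω j ↦ X (i, j) ω) := by
        congr with i : 1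
        exact ((h.precomp (Prod.mk_right_injective i)).map_fun_eq_infinitePi_map
          fun j ↦ hX _).symm

theorem measureReal_setOf_not_imp_le {Ω : Type*} [MeasurableSpace Ω] {μ : Measure Ω}
    {P : Prop} {Q : Ω → Prop} {ε : ℝ} (hε : 0 ≤ ε) (h : P → μ.real {ω | ¬ Q ω} ≤ ε) :
    μ.real {ω | ¬ (P → Q ω)} ≤ ε := by
  by_cases hP : P
  · simpa [hP] using h hP
  · simpa [hP] using hε

section ProbabilitySpace

variable {Ω : Type*} [MeasurableSpace Ω] {μ : Measure Ω} [IsProbabilityMeasure μ]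

theorem integral_comp_bool {B : Ω → Bool} (hB : Measurable B) (g : Bool → ℝ) :
    ∫ ω, g (B ω) ∂μ =
      g true * μ.real {ω | B ω = true} + g false * (1 - μ.real {ω | B ω = true}) := by
  have hS : MeasurableSet {ω | B ω = true} := hB (measurableSet_singleton true)
  have hg : (fun ω ↦ g (B ω)) =
      fun ω ↦ g false + {ω | B ω = true}.indicator (fun _ ↦ g true - g false) ω := by
    ext ω; cases h : B ω <;> simp [h]
  rw [hg, integral_add (integrable_const _) ((integrable_const _).indicator hS),
    integral_const, integral_indicator_const _ hS]
  simp
  ring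

theorem measureReal_le_card_filter_le_exp {ι : Type*} [Fintype ι] {Y : ι → Ω → Bool}
    (hY : ∀ i, Measurable (Y i)) (hind : iIndepFun Y μ) {q ε : ℝ}
    (hq : ∀ i, μ.real {ω | Y i ω = true} ≤ q) (hε : 0 ≤ ε) :
    μ.real {ω | (q + ε) * Fintype.card ι ≤ #{i | Y i ω = true}} ≤
      exp (-2 * ε ^ 2 * Fintype.card ι) := by
  set n : ℝ := (Fintype.card ι : ℝ)
  set g : Bool → ℝ := fun x ↦ if x then 1 else 0
  set m : ι → ℝ := fun i ↦ ∫ ω, g (Y i ω) ∂μ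
  have hm (i : ι) : m i ≤ q := by
    simp only [m]
    rw [integral_comp_bool (hY i) g]
    simpa [g] using hq i
  have hsubG (i : ι) : HasSubgaussianMGF (fun ω ↦ g (Y i ω) - m i) (1 / 4) μ := by
    have h := hasSubgaussianMGF_of_mem_Icc (μ := μ) (a := 0) (b := 1)
      ((Measurable.of_discrete (f := g)).comp (hY i)).aemeasurable
      (ae_of_all _ fun ω ↦ by simp only [Function.comp_apply, g]; split <;> simp)
    norm_num at h
    exact h
  calc μ.real {ω | (q + ε) * n ≤ #{i | Y i ω = true}}
      ≤ μ.real {ω | ε * n ≤ ∑ i, (g (Y i ω) - m i)} := by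
        refine measureReal_mono fun ω hω ↦ ?_
        have := sum_le_sum fun i (_ : i ∈ univ) ↦ hm i
        simp only [sum_const, card_univ, nsmul_eq_mul] at this
        simp only [Set.mem_ofPred_eq, natCast_card_filter] at hω
        simp only [Set.mem_ofPred_eq, sum_sub_distrib, g]
        linarith
    _ ≤ exp (-(ε * n) ^ 2 / (2 * ((∑ i : ι, (1 / 4 : ℝ≥0) : ℝ≥0) : ℝ))) :=
        HasSubgaussianMGF.measure_sum_ge_le_of_iIndepFun
          (hind.comp (fun i x ↦ g x - m i) fun i ↦ Measurable.of_discrete)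
          (fun i _ ↦ hsubG i) (by positivity)
    _ = exp (-2 * ε ^ 2 * n) := by
        rcases eq_or_ne n 0 with h | h
        · simp [h]
        · congr 1
          simp [n] at h ⊢
          field_simp
          ring

theorem measureReal_not_half_lt_card_filter_le {ι S : Type*} [Fintype ι] [MeasurableSpace S]
    [DiscreteMeasurableSpace S] {R : ι → Ω → S} (hR : ∀ i, Measurable (R i))
    (hind : iIndepFun R μ) (G : S → Prop) [DecidablePred G]
    (hG : ∀ i, μ.real {ω | ¬ G (R i ω)} ≤ 1 / 4) :
    μ.real {ω | ¬ ((Fintype.card ι : ℝ) / 2 < #{i | G (R i ω)})} ≤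
      exp (-(Fintype.card ι : ℝ) / 8) := by
  have hoeffding := measureReal_le_card_filter_le_exp (Y := fun i ω ↦ decide ¬ G (R i ω))
    (fun i ↦ (Measurable.of_discrete (f := fun s ↦ decide ¬ G s)).comp (hR i))
    (hind.comp (fun _ s ↦ decide ¬ G s) fun _ ↦ Measurable.of_discrete)
    (by simpa using hG) (by norm_num : (0 : ℝ) ≤ 1 / 4)
  refine (measureReal_mono (Set.ofPred_subset_ofPred.2 fun ω hω ↦ ?_)).trans
    (hoeffding.trans_eq (by ring_nf))
  have hsplit : (Fintype.card ι : ℝ) = #{i | G (R i ω)} + #{i | ¬ G (R i ω)} := by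
    exact_mod_cast (card_filter_add_card_filter_not (s := univ) fun i ↦ G (R i ω)).symm
  simp only [decide_eq_true_eq]
  linarith [not_lt.1 hω]

theorem one_sub_three_mul_le_measureReal_and {A B C : Ω → Prop} {ε : ℝ}
    (hA : μ.real {ω | ¬ A ω} ≤ ε) (hB : μ.real {ω | ¬ B ω} ≤ ε)
    (hC : μ.real {ω | ¬ C ω} ≤ ε) :
    1 - 3 * ε ≤ μ.real {ω | A ω ∧ B ω ∧ C ω} := by
  set S := {ω | A ω ∧ B ω ∧ C ω}
  have hcover : Set.univ ⊆ S ∪ {ω | ¬ A ω} ∪ {ω | ¬ B ω} ∪ {ω | ¬ C ω} :=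
    fun ω _ ↦ by by_cases A ω <;> by_cases B ω <;> by_cases C ω <;> simp_all [S]
  have h1 := measureReal_union_le (μ := μ) S {ω | ¬ A ω}
  have h2 := measureReal_union_le (μ := μ) (S ∪ {ω | ¬ A ω}) {ω | ¬ B ω}
  have h3 := measureReal_union_le (μ := μ) (S ∪ {ω | ¬ A ω} ∪ {ω | ¬ B ω}) {ω | ¬ C ω}
  have h4 := measureReal_mono hcover (measure_ne_top μ _)
  rw [probReal_univ] at h4
  linarith

section Bernoulli

variable {N : Type*} [Fintype N] {b : N → Ω → Bool} {p : N → ℝ}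

theorem measurable_card_filter (hb : ∀ u, Measurable (b u)) :
    Measurable fun ω ↦ (#{u | b u ω = true} : ℝ) :=
  (Measurable.of_discrete (f := fun s : N → Bool ↦ (#{u | s u = true} : ℝ))).comp
    (measurable_pi_lambda _ hb)

theorem integral_card_filter (hb : ∀ u, Measurable (b u))
    (hp : ∀ u, μ.real {ω | b u ω = true} = p u) :
    ∫ ω, (#{u | b u ω = true} : ℝ) ∂μ = ∑ u, p u := by
  simp_rw [natCast_card_filter]
  rw [integral_finsetSum _ fun u _ ↦ ?_]
  · refine sum_congr rfl fun u _ ↦ ?_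
    rw [integral_comp_bool (hb u) (fun x ↦ if x then 1 else 0), hp u]
    simp
  · exact Integrable.of_bound
      ((Measurable.of_discrete (f := fun x : Bool ↦ if x then (1 : ℝ) else 0)).comp
        (hb u)).aestronglyMeasurable 1 (ae_of_all _ fun ω ↦ by split <;> simp)

theorem measureReal_mul_lt_card_filter_le (hb : ∀ u, Measurable (b u))
    (hp : ∀ u, μ.real {ω | b u ω = true} = p u) {a : ℝ} (ha : 0 < a) :
    μ.real {ω | a * ∑ u, p u < #{u | b u ω = true}} ≤ a⁻¹ := by
  have hint : Integrable (fun ω ↦ (#{u | b u ω = true} : ℝ)) μ :=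
    Integrable.of_bound (measurable_card_filter hb).aestronglyMeasurable
      (Fintype.card N) (ae_of_all _ fun ω ↦ by simpa using card_le_univ _)
  have markov (ε : ℝ) : ε * μ.real {ω | ε ≤ #{u | b u ω = true}} ≤ ∑ u, p u :=
    integral_card_filter hb hp ▸
      mul_meas_ge_le_integral_of_nonneg (ae_of_all _ fun ω ↦ by positivity) hint ε
  set d := ∑ u, p u
  have hd : 0 ≤ d := sum_nonneg fun u _ ↦ hp u ▸ measureReal_nonneg
  rcases hd.eq_or_lt with hd0 | hdpos
  · calc μ.real {ω | a * d < #{u | b u ω = true}}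
        ≤ μ.real {ω | 1 ≤ #{u | b u ω = true}} := measureReal_mono fun ω hω ↦ by
          simp only [Set.mem_ofPred_eq, ← hd0, mul_zero, Nat.cast_pos] at hω ⊢
          exact_mod_cast hω
      _ ≤ d := by simpa using markov 1
      _ ≤ a⁻¹ := by rw [← hd0]; positivity
  · have := markov (a * d)
    rw [← one_div, le_div_iff₀ ha]
    calc μ.real {ω | a * d < #{u | b u ω = true}} * a
        ≤ μ.real {ω | a * d ≤ #{u | b u ω = true}} * a := by
          gcongr ?_ * a
          exact measureReal_mono (Set.ofPred_subset_ofPred.2 fun ω ↦ le_of_lt)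
      _ ≤ 1 := by nlinarith

theorem measureReal_two_le_card_filter_le (hind : iIndepFun b μ)
    (hp : ∀ u, μ.real {ω | b u ω = true} = p u) :
    μ.real {ω | 2 ≤ #{u | b u ω = true}} ≤ (∑ u, p u) ^ 2 := by
  have hpair {u v : N} (huv : u ≠ v) :
      μ.real ({ω | b u ω = true} ∩ {ω | b v ω = true}) = p u * p v := by
    rw [← hp u, ← hp v, measureReal_def, measureReal_def, measureReal_def, ← ENNReal.toReal_mul]
    exact congrArg ENNReal.toReal <| (hind.indepFun huv).measure_inter_preimage_eq_mul _ _
      (measurableSet_singleton true) (measurableSet_singleton true)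
  calc μ.real {ω | 2 ≤ #{u | b u ω = true}}
      ≤ μ.real (⋃ q ∈ (univ : Finset N).offDiag, {ω | b q.1 ω = true} ∩ {ω | b q.2 ω = true}) := by
        refine measureReal_mono (fun ω hω ↦ ?_) (measure_ne_top _ _)
        obtain ⟨u, hu, v, hv, huv⟩ := one_lt_card.1 hω
        simp only [mem_filter, mem_univ, true_and] at hu hv
        simp only [Set.mem_iUnion]
        exact ⟨(u, v), by simpa using huv, hu, hv⟩
    _ ≤ ∑ q ∈ (univ : Finset N).offDiag, p q.1 * p q.2 := by
        refine (measureReal_biUnion_finset_le _ _).trans_eq (sum_congr rfl fun q hq ↦ ?_)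
        exact hpair (mem_offDiag.1 hq).2.2
    _ ≤ ∑ q ∈ (univ : Finset N) ×ˢ univ, p q.1 * p q.2 :=
        sum_le_sum_of_subset_of_nonneg (fun q _ ↦ by simp) fun q _ _ ↦
          mul_nonneg (hp q.1 ▸ measureReal_nonneg) (hp q.2 ▸ measureReal_nonneg)
    _ = (∑ u, p u) ^ 2 := by rw [sum_product, sq, sum_mul_sum]

theorem measureReal_card_filter_lt_two_le (hb : ∀ u, Measurable (b u)) (hind : iIndepFun b μ)
    (hp : ∀ u, μ.real {ω | b u ω = true} = p u) :
    μ.real {ω | #{u | b u ω = true} < 2} ≤ exp (1 - (∑ u, p u) / 2) := by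
  set g : Bool → ℝ := fun x ↦ if x then exp (-1) else 1
  have hexp (ω : Ω) : exp (1 - #{u | b u ω = true}) = exp 1 * ∏ u, g (b u ω) := by
    rw [natCast_card_filter, sub_eq_add_neg, exp_add, ← sum_neg_distrib, exp_sum]
    congr 1
    refine prod_congr rfl fun u _ ↦ ?_
    cases b u ω <;> simp [g]
  have hfactor (u : N) : ∫ ω, g (b u ω) ∂μ ≤ exp (-(p u / 2)) := by
    have hp0 : 0 ≤ p u := hp u ▸ measureReal_nonneg
    have he : exp (-1) ≤ 1 / 2 := by
      have := add_one_le_exp 1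
      rw [exp_neg, inv_le_comm₀ (exp_pos 1) (by norm_num)]; linarith
    rw [integral_comp_bool (hb u) g, hp u]
    simp only [g, if_true, Bool.false_eq_true, if_false]
    nlinarith [add_one_le_exp (-(p u / 2))]
  have hint : Integrable (fun ω ↦ exp (1 - #{u | b u ω = true})) μ :=
    Integrable.of_bound (measurable_const.sub (measurable_card_filter hb)).exp.aestronglyMeasurable
      (exp 1) (ae_of_all _ fun ω ↦ by simp)
  calc μ.real {ω | #{u | b u ω = true} < 2}
      ≤ μ.real {ω | 1 ≤ exp (1 - #{u | b u ω = true})} := by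
        refine measureReal_mono (Set.ofPred_subset_ofPred.2 fun ω hω ↦ ?_)
        have : (#{u | b u ω = true} : ℝ) ≤ 1 := by exact_mod_cast Nat.lt_succ_iff.1 hω
        exact one_le_exp (by linarith)
    _ ≤ ∫ ω, exp (1 - #{u | b u ω = true}) ∂μ := by
        simpa using mul_meas_ge_le_integral_of_nonneg (ae_of_all _ fun ω ↦ (exp_pos _).le) hint 1
    _ = exp 1 * ∏ u, ∫ ω, g (b u ω) ∂μ := by
        simp_rw [hexp]
        rw [integral_const_mul, hind.integral_fun_prod_comp (fun u ↦ (hb u).aemeasurable)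
          fun u ↦ Measurable.of_discrete.aestronglyMeasurable]
    _ ≤ exp 1 * ∏ u, exp (-(p u / 2)) := by
        gcongr with u
        exact hfactor u
    _ = exp (1 - (∑ u, p u) / 2) := by
        rw [← exp_sum, ← exp_add, sum_neg_distrib, ← sum_div, sub_eq_add_neg]

end Bernoulli

end ProbabilitySpace

theorem three_mul_exp_le_rpow_neg {Δ C k : ℝ} (hΔ : 2 ≤ Δ) (hC : 1 ≤ C)
    (hk : 24 * C * log Δ ≤ k) : 3 * exp (-k / 8) ≤ Δ ^ (-C) := by
  have hlogΔ : log 2 ≤ log Δ := log_le_log (by norm_num) hΔ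
  have hlog3 : log 3 ≤ 2 * log 2 := by
    rw [← log_rpow (by norm_num)]; exact log_le_log (by norm_num) (by norm_num)
  have hlog2 : 0 ≤ log 2 := log_nonneg (by norm_num)
  rw [rpow_def_of_pos (by linarith), ← exp_log (show (0 : ℝ) < 3 by norm_num), ← exp_add]
  gcongr
  nlinarith

/-- Lemma A.1 of the paper: there is an absolute constant `c ≥ 1` such that for any
`Δ ≥ 2`, `C ≥ 1`, and `k ≥ c·C·ln Δ`, given mutually independent Bernoulli samples
`b (j, u)` with parameters `p u` (over `k` repetitions `j`), with probability at
least `1 - Δ^{-C}` the following hold simultaneously, where `d = ∑ u, p u` and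
`dhat j = #{u | b (j,u) = 1}`: (1) if `d > 20` then `dhat j ≥ 2` for more than half
of the `j`; (2) `dhat j ≤ 4d` for more than half of the `j`; (3) if `d < 0.4` then
`dhat j < 2` for more than half of the `j`. -/
theorem median_estimate_good :
    ∃ c : ℝ, 1 ≤ c ∧
      ∀ (Δ : ℕ), 2 ≤ Δ → ∀ (C : ℝ), 1 ≤ C → ∀ (k : ℕ),
        c * C * Real.log Δ ≤ k →
      ∀ {N : Type} [Fintype N] (p : N → ℝ), (∀ u, p u ∈ Set.Icc (0 : ℝ) 1) →
      ∀ {Ω : Type} [MeasurableSpace Ω] (μ : Measure Ω) [IsProbabilityMeasure μ]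
        (b : (Fin k × N) → Ω → Bool),
        (∀ x, Measurable (b x)) →
        iIndepFun b μ →
        (∀ x : Fin k × N, μ {ω | b x ω = true} = ENNReal.ofReal (p x.2)) →
        ENNReal.ofReal (1 - (Δ : ℝ) ^ (-C)) ≤
          μ {ω |
            (20 < ∑ u, p u →
              (k : ℝ) / 2 <
                ((Finset.univ.filter (fun j : Fin k =>
                  2 ≤ (Finset.univ.filter (fun u : N => b (j, u) ω = true)).card)).card : ℝ)) ∧
            ((k : ℝ) / 2 <
                ((Finset.univ.filter (fun j : Fin k =>
                  ((Finset.univ.filter (fun u : N => b (j, u) ω = true)).card : ℝ)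
                    ≤ 4 * ∑ u, p u)).card : ℝ)) ∧
            (∑ u, p u < 0.4 →
              (k : ℝ) / 2 <
                ((Finset.univ.filter (fun j : Fin k =>
                  (Finset.univ.filter (fun u : N => b (j, u) ω = true)).card < 2)).card : ℝ))} := by
  refine ⟨24, by norm_num, fun Δ hΔ C hC k hk N _ p hp Ω _ μ _ b hb hind hber ↦ ?_⟩
  set d := ∑ u, p u
  have hpr (j : Fin k) (u : N) : μ.real {ω | b (j, u) ω = true} = p u := by
    rw [measureReal_def, hber, ENNReal.toReal_ofReal (hp u).1]
  have hrow (j : Fin k) : iIndepFun (fun u ↦ b (j, u)) μ :=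
    hind.precomp (Prod.mk_right_injective j)
  have majority (G : (N → Bool) → Prop) [DecidablePred G]
      (hG : ∀ j, μ.real {ω | ¬ G fun u ↦ b (j, u) ω} ≤ 1 / 4) :=
    measureReal_not_half_lt_card_filter_le (fun j ↦ measurable_pi_lambda _ fun u ↦ hb (j, u))
      (hind.curry hb) G hG
  simp only [Fintype.card_fin] at majority
  rw [← ofReal_measureReal]
  refine ENNReal.ofReal_le_ofReal <| (sub_le_sub_left (three_mul_exp_le_rpow_neg
    (by exact_mod_cast hΔ) hC hk) 1).trans (one_sub_three_mul_le_measureReal_and ?_ ?_ ?_)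
  · refine measureReal_setOf_not_imp_le (by positivity) fun hd ↦
      majority (fun s ↦ 2 ≤ #{u | s u = true}) fun j ↦ ?_
    have hquarter : exp (1 - d / 2) ≤ 1 / 4 := calc
      exp (1 - d / 2) ≤ (exp 3)⁻¹ := by rw [← exp_neg]; gcongr; linarith
      _ ≤ 1 / 4 := by rw [inv_le_comm₀ (exp_pos 3) (by norm_num)]; linarith [add_one_le_exp 3]
    simpa only [not_le] using (measureReal_card_filter_lt_two_le (fun u ↦ hb (j, u)) (hrow j)
      (hpr j)).trans hquarter
  · exact majority (fun s ↦ (#{u | s u = true} : ℝ) ≤ 4 * d) fun j ↦ by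
      simpa only [not_le, one_div] using
        measureReal_mul_lt_card_filter_le (fun u ↦ hb (j, u)) (hpr j) (a := 4) (by norm_num)
  · refine measureReal_setOf_not_imp_le (by positivity) fun hd ↦
      majority (fun s ↦ #{u | s u = true} < 2) fun j ↦ ?_
    have hd0 : 0 ≤ d := sum_nonneg fun u _ ↦ (hp u).1
    simpa only [not_lt] using (measureReal_two_le_card_filter_le (hrow j) (hpr j)).trans
      (by nlinarith)
end

section
/- Let T and h be natural numbers and let p : {0, 1, ..., T} -> R satisfy p(0) = 1/2, and for every t in {0, ..., T-1} either p(t+1) = p(t)/2 or p(t+1) = min(2*p(t), 1/2). If the number of indices t in {0, ..., T-1} with p(t+1) = p(t)/2 is at most h, then the number of indices t in {0, ..., T-1} with p(t) = 1/2 is at least T - 2*h. -/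
/-- Deterministic counting core of the 'small h implies large g₁' step: if `p 0 = 1/2`
and each step either halves `p` or applies the capped doubling `p ↦ min (2p) (1/2)`,
and at most `h` steps are halving steps, then `p t = 1/2` in at least `T - 2h` of the
iterations `t ∈ {0, …, T-1}`. -/
theorem capped_doubling_counting
    (T h : ℕ) (p : ℕ → ℝ)
    (hp0 : p 0 = 1 / 2)
    (hstep : ∀ t < T, p (t + 1) = p t / 2 ∨ p (t + 1) = min (2 * p t) (1 / 2))
    (hhalve : ((Finset.range T).filter (fun t => p (t + 1) = p t / 2)).card ≤ h) :
    (T : ℝ) - 2 * h ≤ ((Finset.range T).filter (fun t => p t = 1 / 2)).card := by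
  classical
  have key : ∀ n ≤ T, ∃ k : ℕ, p n = 1 / 2 * (1 / 2) ^ k ∧
      ((Finset.range n).filter (fun t => ¬ p t = 1 / 2)).card + k ≤
        2 * ((Finset.range n).filter (fun t => p (t + 1) = p t / 2)).card := by
    intro n
    induction n with
    | zero => intro _; exact ⟨0, by simpa using hp0, by simp⟩
    | succ n ih =>
      intro hn
      obtain ⟨k, hk, hcount⟩ := ih (Nat.le_of_succ_le hn)
      have hnT : n < T := hn
      have hBsucc : ∀ (P : ℕ → Prop) [DecidablePred P],
          ((Finset.range (n+1)).filter P).card =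
          ((Finset.range n).filter P).card + (if P n then 1 else 0) := by
        intro P _
        rw [Finset.range_add_one, Finset.filter_insert]
        split <;> simp [Finset.card_insert_of_notMem, Finset.mem_filter]
      rcases hstep n hnT with hhal | hdbl
      · -- halving step
        refine ⟨k + 1, ?_, ?_⟩
        · rw [hhal, hk]; ring
        · rw [hBsucc, hBsucc]
          rw [if_pos hhal]
          split <;> omega
      · -- doubling step
        cases k with
        | zero =>
          have hpn : p n = 1 / 2 := by simpa using hk
          refine ⟨0, ?_, ?_⟩
          · rw [hdbl, hpn]; norm_num
          · rw [hBsucc, hBsucc]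
            rw [if_neg (by simp [hpn])]
            split <;> omega
        | succ m =>
          have hpn : p n = 1 / 2 * (1 / 2) ^ (m + 1) := hk
          have hlt : p n < 1 / 2 := by
            rw [hpn]
            have : ((1:ℝ)/2) ^ (m+1) < 1 :=
              pow_lt_one₀ (by norm_num) (by norm_num) (by omega)
            nlinarith
          refine ⟨m, ?_, ?_⟩
          · have h2 : 2 * p n ≤ 1 / 2 := by
              rw [hpn]
              have : ((1:ℝ)/2) ^ (m+1) ≤ 1/2 := by
                calc ((1:ℝ)/2) ^ (m+1) ≤ ((1:ℝ)/2) ^ 1 :=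
                      pow_le_pow_of_le_one (by norm_num) (by norm_num) (by omega)
                  _ = 1/2 := by norm_num
              nlinarith
            rw [hdbl, min_eq_left h2, hpn]; ring
          · rw [hBsucc, hBsucc]
            rw [if_pos (by intro hc; rw [hc] at hlt; linarith)]
            split <;> omega
  obtain ⟨k, _, hcount⟩ := key T le_rfl
  have hsplit : ((Finset.range T).filter (fun t => p t = 1 / 2)).card +
      ((Finset.range T).filter (fun t => ¬ p t = 1 / 2)).card = T := by
    rw [Finset.card_filter_add_card_filter_not]
    · exact Finset.card_range T
  have hB : ((Finset.range T).filter (fun t => ¬ p t = 1 / 2)).card ≤ 2 * h := by omega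
  have hnat : T ≤ ((Finset.range T).filter (fun t => p t = 1 / 2)).card + 2 * h := by omega
  have hcast : (T : ℝ) ≤ ((Finset.range T).filter (fun t => p t = 1 / 2)).card + 2 * h := by
    exact_mod_cast hnat
  linarith
end

section
/- For all real constants c_1 >= 1 and c_2 >= 1 there exist a constant C > 0 and a threshold Delta_0 such that for every integer Delta >= Delta_0 the following holds: set L = log_2(Delta) and R_0 = 4 * log_2(L), and let m be the least natural number with R_0 * 2^m >= c_1 * L. Then 2^m * (c_2 * R_0^2 + 10 * R_0 * m) <= C * L * log_2(L). -/
/-!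
Write `L = log₂ Δ`, `ℓ = log₂ L` and `R₀ = 4ℓ`. By minimality of `m`, either `m = 0` or
`R₀ 2^(m-1) < c₁ L`; in both cases `R₀ 2^m ≤ max R₀ (2 c₁ L) = O(L)`, and since `R₀ ≥ 2` also
`2^m ≤ c₁ L`, i.e. `m ≤ log₂ c₁ + ℓ`. Hence
`2^m (c₂ R₀² + 10 R₀ m) = R₀ 2^m (c₂ R₀ + 10 m) = O(L) · O(ℓ)`.
-/

open Real

lemma logb_two_le_self {x : ℝ} (hx : 1 ≤ x) : logb 2 x ≤ x := by
  rw [logb_le_iff_le_rpow one_lt_two (by linarith)]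
  have h := one_add_mul_self_le_rpow_one_add (s := 1) (by norm_num) hx
  rw [mul_one, one_add_one_eq_two] at h
  linarith

lemma le_logb_two_of_two_pow_le {x : ℝ} {n : ℕ} (h : (2 : ℝ) ^ n ≤ x) : (n : ℝ) ≤ logb 2 x := by
  rwa [le_logb_iff_rpow_le one_lt_two (lt_of_lt_of_le (by positivity) h), rpow_natCast]

section MinimalDoubling

variable {R T : ℝ} {m : ℕ}

lemma mul_two_pow_le_max_of_minimal (hmin : ∀ m' < m, R * 2 ^ m' < T) :
    R * 2 ^ m ≤ max R (2 * T) := by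
  cases m with
  | zero => simp
  | succ k =>
    have := hmin k k.lt_succ_self
    rw [pow_succ]
    exact le_max_of_le_right (by linarith)

lemma natCast_le_logb_two_of_minimal (hR : 2 ≤ R) (hT : 1 ≤ T)
    (hmin : ∀ m' < m, R * 2 ^ m' < T) : (m : ℝ) ≤ logb 2 T := by
  cases m with
  | zero => simpa using logb_nonneg one_lt_two hT
  | succ k =>
    apply le_logb_two_of_two_pow_le
    have := hmin k k.lt_succ_self
    rw [pow_succ, mul_comm]
    nlinarith [pow_pos (two_pos (α := ℝ)) k]

end MinimalDoubling

/-- Exponent computation in the proof of the main LCA theorem: unfolding the query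
recurrence from `T = c₁·log₂ Δ` down to base phase length `R₀ = 4·log₂ log₂ Δ`
with base cost exponent `c₂·R₀²` yields a total exponent `O(log₂ Δ · log₂ log₂ Δ)`. -/
theorem lca_exponent_computation
    (c₁ c₂ : ℝ) (hc₁ : 1 ≤ c₁) (hc₂ : 1 ≤ c₂) :
    ∃ C : ℝ, 0 < C ∧ ∃ Δ₀ : ℕ, ∀ Δ : ℕ, Δ₀ ≤ Δ →
      ∀ m : ℕ,
        c₁ * Real.logb 2 Δ ≤ 4 * Real.logb 2 (Real.logb 2 Δ) * 2 ^ m →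
        (∀ m' : ℕ, m' < m →
          4 * Real.logb 2 (Real.logb 2 Δ) * 2 ^ m' < c₁ * Real.logb 2 Δ) →
        (2 : ℝ) ^ m *
            (c₂ * (4 * Real.logb 2 (Real.logb 2 Δ)) ^ 2 +
              10 * (4 * Real.logb 2 (Real.logb 2 Δ)) * m)
          ≤ C * Real.logb 2 Δ * Real.logb 2 (Real.logb 2 Δ) := by
  set b := logb 2 c₁
  have hb : 0 ≤ b := logb_nonneg one_lt_two hc₁
  refine ⟨(4 + 2 * c₁) * (4 * c₂ + 10 + 10 * b), by positivity, 4, fun Δ hΔ m _ hmin => ?_⟩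
  set L := logb 2 (Δ : ℝ)
  set ℓ := logb 2 L
  have hL : 2 ≤ L := by
    rw [le_logb_iff_rpow_le one_lt_two (by positivity), show (2 : ℝ) ^ (2 : ℝ) = 4 by norm_num]
    exact_mod_cast hΔ
  have hℓ : 1 ≤ ℓ := by
    rw [le_logb_iff_rpow_le one_lt_two (by positivity)]
    simpa using hL
  have hℓL : ℓ ≤ L := logb_two_le_self (by linarith)
  have hX : 4 * ℓ * 2 ^ m ≤ (4 + 2 * c₁) * L :=
    (mul_two_pow_le_max_of_minimal hmin).trans (max_le (by nlinarith) (by nlinarith))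
  have hm : (m : ℝ) ≤ b + ℓ := by
    rw [← logb_mul (by positivity) (by positivity)]
    exact natCast_le_logb_two_of_minimal (by linarith) (by nlinarith) hmin
  calc (2 : ℝ) ^ m * (c₂ * (4 * ℓ) ^ 2 + 10 * (4 * ℓ) * m)
      = (4 * ℓ * 2 ^ m) * (4 * c₂ * ℓ + 10 * m) := by ring
    _ ≤ ((4 + 2 * c₁) * L) * ((4 * c₂ + 10 + 10 * b) * ℓ) :=
        mul_le_mul hX (by nlinarith) (by positivity) (by positivity)
    _ = (4 + 2 * c₁) * (4 * c₂ + 10 + 10 * b) * L * ℓ := by ring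
end
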